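/- Let p : ℝ^n → [1,∞] be measurable and suppose that for some t ∈ (0,1) the t-median maximal operator m_t is bounded on L^{p(·)} with constant C (i.e., ‖m_t f‖_{p(·)} ≤ C‖f‖_{p(·)} for all f ∈ L^{p(·)}). Then for every λ ∈ (t,1), every family F of pairwise disjoint cubes, every nonnegative family (t_Q)_{Q∈F}, and every choice of measurable sets E_Q ⊆ Q with |E_Q| ≥ λ|Q| (Q ∈ F), one has ‖∑_{Q∈F} t_Q χ_Q‖_{p(·)} ≤ C ‖∑_{Q∈F} t_Q χ_{E_Q}‖_{p(·)}; in particular p(·) satisfies the A_∞ condition. -/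

import Mathlib

open MeasureTheory ENNReal Set

noncomputable section

/-- An axis-parallel cube in `ℝⁿ`, given by its center and (positive) side length. -/
structure RCube (n : ℕ) where
  center : Fin n → ℝ
  side : ℝ
  side_pos : 0 < side

namespace RCube

/-- The (closed) cube as a subset of `ℝⁿ`. -/
def toSet {n : ℕ} (Q : RCube n) : Set (Fin n → ℝ) :=
  {x | ∀ i, |x i - Q.center i| ≤ Q.side / 2}

/-- `rQ`: the cube concentric with `Q` whose side length is `r` times that of `Q`. -/
def scaledSet {n : ℕ} (Q : RCube n) (r : ℝ) : Set (Fin n → ℝ) :=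
  {x | ∀ i, |x i - Q.center i| ≤ r * Q.side / 2}

end RCube

/-- A family of pairwise disjoint cubes. -/
def PairwiseDisjointCubes {n : ℕ} (F : Set (RCube n)) : Prop :=
  F.Pairwise fun Q₁ Q₂ => Disjoint Q₁.toSet Q₂.toSet

/-- The variable Lebesgue norm `‖f‖_{p(·)}` for a real-valued (finite) exponent,
applied to an `ℝ≥0∞`-valued function: `inf {λ > 0 : ∫ (f/λ)^{p(x)} dx ≤ 1}`. -/
def vnorm {n : ℕ} (p : (Fin n → ℝ) → ℝ) (f : (Fin n → ℝ) → ℝ≥0∞) : ℝ≥0∞ :=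
  sInf {lam : ℝ≥0∞ | 0 < lam ∧ (∫⁻ x, (f x / lam) ^ p x) ≤ 1}

/-- `t^e` for `t, e ∈ [0,∞]`, with the standard variable-exponent convention
`t^∞ = 0` for `t ≤ 1` and `t^∞ = ∞` for `t > 1`. -/
def epow (t e : ℝ≥0∞) : ℝ≥0∞ :=
  if e = ∞ then (if t ≤ 1 then 0 else ∞) else t ^ e.toReal

/-- The variable Lebesgue norm for an exponent with values in `[1,∞]`. -/
def vnormE {n : ℕ} (p : (Fin n → ℝ) → ℝ≥0∞) (f : (Fin n → ℝ) → ℝ≥0∞) : ℝ≥0∞ :=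
  sInf {lam : ℝ≥0∞ | 0 < lam ∧ (∫⁻ x, epow (f x / lam) (p x)) ≤ 1}

/-- `|f|` as an `ℝ≥0∞`-valued function. -/
def ofR {n : ℕ} (f : (Fin n → ℝ) → ℝ) : (Fin n → ℝ) → ℝ≥0∞ :=
  fun x => ENNReal.ofReal |f x|

/-- The `ℝ≥0∞`-valued characteristic function of a set. -/
def chiE {n : ℕ} (S : Set (Fin n → ℝ)) : (Fin n → ℝ) → ℝ≥0∞ :=
  S.indicator fun _ => 1

/-- The Hardy--Littlewood maximal operator (over axis-parallel cubes containing `x`). -/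
def hlMaximal {n : ℕ} (f : (Fin n → ℝ) → ℝ) (x : Fin n → ℝ) : ℝ≥0∞ :=
  ⨆ (Q : RCube n) (_ : x ∈ Q.toSet),
    (∫⁻ y in Q.toSet, ENNReal.ofReal |f y|) / volume Q.toSet

/-- `M` is bounded on `L^{p(·)}`: there is `C > 0` with `‖Mf‖_{p(·)} ≤ C ‖f‖_{p(·)}`
for every `f ∈ L^{p(·)}`. -/
def MaximalBounded {n : ℕ} (p : (Fin n → ℝ) → ℝ) : Prop :=
  ∃ C > (0 : ℝ), ∀ f : (Fin n → ℝ) → ℝ, Measurable f → vnorm p (ofR f) < ∞ →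
    vnorm p (hlMaximal f) ≤ ENNReal.ofReal C * vnorm p (ofR f)

/-- The function `∑_{Q ∈ F} t_Q χ_{E_Q}` (for a pairwise disjoint family,
written as a pointwise supremum). -/
def cubeSum {n : ℕ} (F : Set (RCube n)) (t : RCube n → ℝ)
    (E : RCube n → Set (Fin n → ℝ)) (x : Fin n → ℝ) : ℝ≥0∞ :=
  ⨆ (Q : RCube n) (_ : Q ∈ F) (_ : x ∈ E Q), ENNReal.ofReal (t Q)

/-- `p(·)` satisfies the `A_∞` condition with parameter `lam` and constant `C`. -/
def AInftyWith {n : ℕ} (p : (Fin n → ℝ) → ℝ) (lam C : ℝ) : Prop :=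
  ∀ F : Set (RCube n), PairwiseDisjointCubes F →
    ∀ t : RCube n → ℝ, (∀ Q ∈ F, 0 ≤ t Q) →
      ∀ E : RCube n → Set (Fin n → ℝ),
        (∀ Q ∈ F, MeasurableSet (E Q) ∧ E Q ⊆ Q.toSet ∧
          ENNReal.ofReal lam * volume Q.toSet ≤ volume (E Q)) →
        vnorm p (cubeSum F t RCube.toSet) ≤ ENNReal.ofReal C * vnorm p (cubeSum F t E)

/-- The `A_∞` condition for a real-valued exponent. -/
def AInfty {n : ℕ} (p : (Fin n → ℝ) → ℝ) : Prop :=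
  ∃ lam ∈ Ioo (0 : ℝ) 1, ∃ C > (0 : ℝ), AInftyWith p lam C

/-- `p(·)` satisfies the `A_∞` condition with parameter `lam` and constant `C`
(exponent with values in `[1,∞]`). -/
def AInftyWithE {n : ℕ} (p : (Fin n → ℝ) → ℝ≥0∞) (lam C : ℝ) : Prop :=
  ∀ F : Set (RCube n), PairwiseDisjointCubes F →
    ∀ t : RCube n → ℝ, (∀ Q ∈ F, 0 ≤ t Q) →
      ∀ E : RCube n → Set (Fin n → ℝ),
        (∀ Q ∈ F, MeasurableSet (E Q) ∧ E Q ⊆ Q.toSet ∧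
          ENNReal.ofReal lam * volume Q.toSet ≤ volume (E Q)) →
        vnormE p (cubeSum F t RCube.toSet) ≤ ENNReal.ofReal C * vnormE p (cubeSum F t E)

/-- The `A_∞` condition for an exponent with values in `[1,∞]`. -/
def AInftyE {n : ℕ} (p : (Fin n → ℝ) → ℝ≥0∞) : Prop :=
  ∃ lam ∈ Ioo (0 : ℝ) 1, ∃ C > (0 : ℝ), AInftyWithE p lam C

/-- The nonincreasing-rearrangement value `(f χ_Q)^*(s) = inf {α : |{x ∈ Q : |f x| > α}| ≤ s}`. -/
def rearr {n : ℕ} (f : (Fin n → ℝ) → ℝ) (Q : RCube n) (s : ℝ≥0∞) : ℝ≥0∞ :=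
  sInf {a : ℝ≥0∞ | volume {x | x ∈ Q.toSet ∧ a < ENNReal.ofReal |f x|} ≤ s}

/-- The `λ`-median maximal operator `m_λ`. -/
def medianMax {n : ℕ} (lam : ℝ) (f : (Fin n → ℝ) → ℝ) (x : Fin n → ℝ) : ℝ≥0∞ :=
  ⨆ (Q : RCube n) (_ : x ∈ Q.toSet), rearr f Q (ENNReal.ofReal lam * volume Q.toSet)

/-- The modified median maximal operator `m_{τ,r}` (supremum over cubes `Q` with `x ∈ rQ`). -/
def medianMaxR {n : ℕ} (tau r : ℝ) (f : (Fin n → ℝ) → ℝ) (x : Fin n → ℝ) : ℝ≥0∞ :=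
  ⨆ (Q : RCube n) (_ : x ∈ Q.scaledSet r), rearr f Q (ENNReal.ofReal tau * volume Q.toSet)

/-- The average `⟨f⟩_Q = (1/|Q|) ∫_Q f`. -/
def cubeAvg {n : ℕ} (f : (Fin n → ℝ) → ℝ) (Q : RCube n) : ℝ :=
  (∫ y in Q.toSet, f y) / (volume Q.toSet).toReal

/-- `|T_F f|` for a pairwise disjoint family `F`, written as a pointwise supremum. -/
def avgSum {n : ℕ} (F : Set (RCube n)) (f : (Fin n → ℝ) → ℝ) (x : Fin n → ℝ) : ℝ≥0∞ :=
  ⨆ (Q : RCube n) (_ : Q ∈ F) (_ : x ∈ Q.toSet), ENNReal.ofReal |cubeAvg f Q|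

/-- The reverse Hölder condition `RH`. -/
def RHCond {n : ℕ} (p : (Fin n → ℝ) → ℝ) : Prop :=
  ∃ r : ℝ, 1 < r ∧ ∃ C : ℝ, 0 < C ∧
    ∀ S : Set (RCube n), PairwiseDisjointCubes S →
      ∀ t : RCube n → ℝ, (∀ Q ∈ S, 0 ≤ t Q) →
        (∑' Q : S, ∫⁻ x in Q.1.toSet, ENNReal.ofReal (t Q.1) ^ p x) ≤ 1 →
        (∑' Q : S, volume Q.1.toSet *
            ((∫⁻ x in Q.1.toSet, ENNReal.ofReal (t Q.1) ^ (r * p x)) / volume Q.1.toSet)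
              ^ (1 / r)) ≤ ENNReal.ofReal C


namespace Statement3Aux

lemma ball_subset_toSet {n : ℕ} (Q : RCube n) :
    Metric.ball Q.center (Q.side / 2) ⊆ Q.toSet := by
  intro x hx i
  have h1 : dist (x i) (Q.center i) ≤ dist x Q.center := dist_le_pi_dist x Q.center i
  rw [Real.dist_eq] at h1
  have h2 : dist x Q.center < Q.side / 2 := Metric.mem_ball.mp hx
  exact h1.trans h2.le

lemma countable_of_disjoint {n : ℕ} {F : Set (RCube n)}
    (hF : PairwiseDisjointCubes F) : F.Countable := by
  have : Set.PairwiseDisjoint F RCube.toSet := hF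
  refine this.countable_of_nonempty_interior fun Q _ => ?_
  refine ⟨Q.center, ?_⟩
  have hb : Metric.ball Q.center (Q.side / 2) ⊆ interior Q.toSet :=
    interior_maximal (ball_subset_toSet Q) Metric.isOpen_ball
  exact hb (Metric.mem_ball_self (by linarith [Q.side_pos]))

lemma toSet_eq_pi {n : ℕ} (Q : RCube n) :
    Q.toSet = Set.pi Set.univ
      (fun i => Icc (Q.center i - Q.side / 2) (Q.center i + Q.side / 2)) := by
  ext x
  simp only [RCube.toSet, Set.mem_setOf_eq, Set.mem_pi, Set.mem_univ, true_implies,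
    Set.mem_Icc]
  constructor
  · intro h i
    have := abs_le.mp (h i); constructor <;> linarith [this.1, this.2]
  · intro h i
    rw [abs_le]; constructor <;> linarith [(h i).1, (h i).2]

lemma volume_toSet {n : ℕ} (Q : RCube n) :
    volume Q.toSet = ENNReal.ofReal Q.side ^ n := by
  rw [toSet_eq_pi, volume_pi_pi]
  have h : ∀ i : Fin n, volume (Icc (Q.center i - Q.side / 2) (Q.center i + Q.side / 2))
      = ENNReal.ofReal Q.side := by
    intro i
    rw [Real.volume_Icc]
    congr 1
    ring
  simp [h, Finset.prod_const]

lemma volume_toSet_ne_zero {n : ℕ} (Q : RCube n) : volume Q.toSet ≠ 0 := by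
  rw [volume_toSet]
  exact pow_ne_zero n (ENNReal.ofReal_pos.mpr Q.side_pos).ne'

lemma volume_toSet_ne_top {n : ℕ} (Q : RCube n) : volume Q.toSet ≠ ∞ :=
  volume_toSet Q ▸ (ENNReal.pow_ne_top ENNReal.ofReal_ne_top)

lemma unique_cube {n : ℕ} {F : Set (RCube n)} (hF : PairwiseDisjointCubes F)
    {Q₁ Q₂ : RCube n} (h₁ : Q₁ ∈ F) (h₂ : Q₂ ∈ F) {x : Fin n → ℝ}
    (hx₁ : x ∈ Q₁.toSet) (hx₂ : x ∈ Q₂.toSet) : Q₁ = Q₂ := by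
  by_contra hne
  exact Set.disjoint_left.mp (hF h₁ h₂ hne) hx₁ hx₂

lemma cubeSum_eq_of_mem {n : ℕ} {F : Set (RCube n)} (hF : PairwiseDisjointCubes F)
    {t : RCube n → ℝ} {E : RCube n → Set (Fin n → ℝ)} (hE : ∀ Q ∈ F, E Q ⊆ Q.toSet)
    {Q₀ : RCube n} (hQ₀ : Q₀ ∈ F) {x : Fin n → ℝ} (hx : x ∈ E Q₀) :
    cubeSum F t E x = ENNReal.ofReal (t Q₀) := by
  apply le_antisymm
  · refine iSup_le fun Q => iSup_le fun hQ => iSup_le fun hxQ => ?_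
    have hQeq : Q = Q₀ := unique_cube hF hQ hQ₀ (hE Q hQ hxQ) (hE Q₀ hQ₀ hx)
    subst hQeq; exact le_rfl
  · exact le_iSup_of_le Q₀ (le_iSup_of_le hQ₀ (le_iSup_of_le hx le_rfl))

lemma cubeSum_ne_top {n : ℕ} {F : Set (RCube n)} (hF : PairwiseDisjointCubes F)
    {t : RCube n → ℝ} {E : RCube n → Set (Fin n → ℝ)} (hE : ∀ Q ∈ F, E Q ⊆ Q.toSet)
    (x : Fin n → ℝ) : cubeSum F t E x ≠ ∞ := by
  by_cases h : ∃ Q ∈ F, x ∈ E Q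
  · obtain ⟨Q, hQ, hx⟩ := h
    rw [cubeSum_eq_of_mem hF hE hQ hx]
    exact ENNReal.ofReal_ne_top
  · have hz : cubeSum F t E x = 0 := by
      refine le_antisymm ?_ zero_le
      exact iSup_le fun Q => iSup_le fun hQ => iSup_le fun hx => (h ⟨Q, hQ, hx⟩).elim
    rw [hz]; exact ENNReal.zero_ne_top

lemma measurable_cubeSum {n : ℕ} {F : Set (RCube n)} (hFc : F.Countable)
    {t : RCube n → ℝ} {E : RCube n → Set (Fin n → ℝ)}
    (hE : ∀ Q ∈ F, MeasurableSet (E Q)) : Measurable (cubeSum F t E) := by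
  have heq : cubeSum F t E = fun x =>
      ⨆ Q : F, (E Q.1).indicator (fun _ => ENNReal.ofReal (t Q.1)) x := by
    funext x
    rw [cubeSum, iSup_subtype']
    refine iSup_congr fun Q => ?_
    by_cases hx : x ∈ E Q.1
    · simp [hx]
    · simp [hx]
  rw [heq]
  have : Countable ↥F := hFc.to_subtype
  exact Measurable.iSup fun Q => Measurable.indicator measurable_const (hE Q.1 Q.2)

lemma epow_le_epow {a b e : ℝ≥0∞} (h : a ≤ b) : epow a e ≤ epow b e := by
  unfold epow
  split_ifs with he ha hb hb2
  · exact le_rfl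
  · exact le_top
  · exact absurd (h.trans hb2) ha
  · exact le_rfl
  · exact ENNReal.rpow_le_rpow h ENNReal.toReal_nonneg

lemma vnormE_mono {n : ℕ} (p : (Fin n → ℝ) → ℝ≥0∞) {f g : (Fin n → ℝ) → ℝ≥0∞}
    (h : ∀ x, f x ≤ g x) : vnormE p f ≤ vnormE p g := by
  apply sInf_le_sInf
  rintro lam ⟨hl, hint⟩
  exact ⟨hl, le_trans (lintegral_mono fun x =>
    epow_le_epow (ENNReal.div_le_div_right (h x) lam)) hint⟩

end Statement3Aux

open Statement3Aux in
theorem statement3 {n : ℕ} (p : (Fin n → ℝ) → ℝ≥0∞) (hpm : Measurable p)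
    (hp1 : ∀ x, 1 ≤ p x) (t : ℝ) (ht : t ∈ Ioo (0 : ℝ) 1) (C : ℝ) (hC : 0 < C)
    (hbound : ∀ f : (Fin n → ℝ) → ℝ, Measurable f → vnormE p (ofR f) < ∞ →
      vnormE p (medianMax t f) ≤ ENNReal.ofReal C * vnormE p (ofR f)) :
    (∀ lam ∈ Ioo t 1, AInftyWithE p lam C) ∧ AInftyE p := by
  have ht0 := ht.1
  have ht1 := ht.2
  have main : ∀ lam ∈ Ioo t 1, AInftyWithE p lam C := by
    intro lam hlam F hF tq htq E hE
    have hFc : F.Countable := countable_of_disjoint hF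
    have hEsub : ∀ Q ∈ F, E Q ⊆ Q.toSet := fun Q hQ => (hE Q hQ).2.1
    by_cases hfin : vnormE p (cubeSum F tq E) = ∞
    · rw [hfin, ENNReal.mul_top ((ENNReal.ofReal_pos.mpr hC).ne')]
      exact le_top
    set g : (Fin n → ℝ) → ℝ := fun x => (cubeSum F tq E x).toReal with hg
    have hgm : Measurable g :=
      (measurable_cubeSum hFc fun Q hQ => (hE Q hQ).1).ennreal_toReal
    have hofR : ofR g = cubeSum F tq E := by
      funext x
      have hne := cubeSum_ne_top hF hEsub (t := tq) x
      simp only [ofR, hg, abs_of_nonneg ENNReal.toReal_nonneg]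
      exact ENNReal.ofReal_toReal hne
    have hpt : ∀ x, cubeSum F tq RCube.toSet x ≤ medianMax t g x := by
      intro x
      refine iSup_le fun Q => iSup_le fun hQ => iSup_le fun hxQ => ?_
      have h1 : ENNReal.ofReal (tq Q) ≤
          rearr g Q (ENNReal.ofReal t * volume Q.toSet) := by
        refine le_sInf fun a ha => ?_
        by_contra hlt
        push_neg at hlt
        have hsub : E Q ⊆ {y | y ∈ Q.toSet ∧ a < ENNReal.ofReal |g y|} := by
          intro y hy
          refine ⟨hEsub Q hQ hy, ?_⟩
          have : ENNReal.ofReal |g y| = cubeSum F tq E y := congrFun hofR y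
          rw [this, cubeSum_eq_of_mem hF hEsub hQ hy]
          exact hlt
        have hvol : ENNReal.ofReal lam * volume Q.toSet ≤
            volume {y | y ∈ Q.toSet ∧ a < ENNReal.ofReal |g y|} :=
          le_trans (hE Q hQ).2.2 (measure_mono hsub)
        have hle : ENNReal.ofReal lam * volume Q.toSet ≤
            ENNReal.ofReal t * volume Q.toSet := hvol.trans ha
        have hlt2 : ENNReal.ofReal t * volume Q.toSet <
            ENNReal.ofReal lam * volume Q.toSet := by
          rw [mul_comm _ (volume Q.toSet), mul_comm _ (volume Q.toSet)]
          refine ENNReal.mul_lt_mul_right (volume_toSet_ne_zero Q)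
            (volume_toSet_ne_top Q) ?_
          exact ENNReal.ofReal_lt_ofReal_iff (by linarith [hlam.1]) |>.mpr hlam.1
        exact absurd hle (not_le.mpr hlt2)
      exact h1.trans (le_iSup_of_le Q (le_iSup_of_le hxQ le_rfl))
    calc vnormE p (cubeSum F tq RCube.toSet)
        ≤ vnormE p (medianMax t g) := vnormE_mono p hpt
      _ ≤ ENNReal.ofReal C * vnormE p (ofR g) :=
          hbound g hgm (by rw [hofR]; exact lt_top_iff_ne_top.mpr hfin)
      _ = ENNReal.ofReal C * vnormE p (cubeSum F tq E) := by rw [hofR]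
  refine ⟨main, ⟨(t + 1) / 2, ⟨by linarith, by linarith⟩, C, hC,
    main _ ⟨by linarith, by linarith⟩⟩⟩
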